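/- arXiv:2210.15423 — 5 statements merged into one kernel-verified Lean document; each statement's English description precedes it below -/
import Mathlib

section
/- Let d ≥ 1 and n ≥ d + 1. Suppose a_1, …, a_n ∈ ℝ^d affinely span ℝ^d and b_1, …, b_n ∈ ℝ^{n−d−1} form a Gale-dual pair with a_1, …, a_n. Suppose (I⁺, I⁻) are disjoint nonempty subsets of [n] forming a minimal Radon pair for a_1, …, a_n. Then there exists α ∈ ℝ^{n−d−1}, α ≠ 0, such that ⟪b_j, α⟫ > 0 for all j ∈ I⁺, ⟪b_j, α⟫ < 0 for all j ∈ I⁻, and ⟪b_j, α⟫ = 0 for all j ∉ I⁺ ∪ I⁻. -/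
/-!
A point `x` of `conv a(I⁺) ∩ conv a(I⁻)` gives convex weights `λ` on `I⁺` and `μ` on `I⁻` with
`∑ λⱼ aⱼ = x = ∑ μⱼ aⱼ`; minimality of the Radon pair forces every weight to be strictly positive,
since a vanishing weight would put `x` in the hull of a smaller set. Hence `t = λ - μ` is an affine
dependence of the `aⱼ` with sign pattern `(I⁺, I⁻)`, and Gale duality writes it as `tⱼ = ⟪bⱼ, α⟫`.
-/

open Finset

section ConvexWeights

variable {𝕜 E ι : Type*} [Field 𝕜] [LinearOrder 𝕜] [IsStrictOrderedRing 𝕜]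
  [AddCommGroup E] [Module 𝕜 E] [Fintype ι]

theorem mem_convexHull_image_iff_exists_weights (a : ι → E) (I : Finset ι) {x : E} :
    x ∈ convexHull 𝕜 (a '' I) ↔ ∃ w : ι → 𝕜, (∀ j, 0 ≤ w j) ∧ (∀ j ∉ I, w j = 0) ∧
      ∑ j, w j = 1 ∧ ∑ j, w j • a j = x := by
  classical
  constructor
  · refine fun hx ↦ convexHull_min (t := {y | ∃ w : ι → 𝕜, (∀ j, 0 ≤ w j) ∧ (∀ j ∉ I, w j = 0) ∧
      ∑ j, w j = 1 ∧ ∑ j, w j • a j = y}) ?_ ?_ hx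
    · rintro _ ⟨j, hj, rfl⟩
      refine ⟨Pi.single j 1, Pi.single_nonneg.mpr zero_le_one,
        fun k hk ↦ Pi.single_eq_of_ne (ne_of_mem_of_not_mem hj hk).symm _, by simp,
        by simp [Pi.single_apply]⟩
    · rintro _ ⟨w, hw₀, hwI, hw₁, rfl⟩ _ ⟨v, hv₀, hvI, hv₁, rfl⟩ θ η hθ hη hθη
      refine ⟨θ • w + η • v, fun j ↦ ?_, fun j hj ↦ ?_, ?_, ?_⟩
      · simpa using add_nonneg (mul_nonneg hθ (hw₀ j)) (mul_nonneg hη (hv₀ j))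
      · simp [hwI j hj, hvI j hj]
      · simp [sum_add_distrib, ← mul_sum, hw₁, hv₁, hθη]
      · simp [add_smul, mul_smul, sum_add_distrib, smul_sum]
  · rintro ⟨w, hw₀, hwI, hw₁, rfl⟩
    have hw₁' : ∑ j ∈ I, w j = 1 := by
      rw [← hw₁, sum_subset (subset_univ I) fun j _ hj ↦ hwI j hj]
    rw [← sum_subset (subset_univ I) fun j _ hj ↦ by rw [hwI j hj, zero_smul],
      ← centerMass_eq_of_sum_1 _ _ hw₁']
    exact centerMass_mem_convexHull _ (fun j _ ↦ hw₀ j) (by simp [hw₁'])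
      fun j hj ↦ Set.mem_image_of_mem a hj

theorem exists_pos_weights_of_mem_convexHull_image (a : ι → E) (I : Finset ι) {x : E}
    (hx : x ∈ convexHull 𝕜 (a '' I)) (hmin : ∀ I' ⊂ I, x ∉ convexHull 𝕜 (a '' I')) :
    ∃ w : ι → 𝕜, (∀ j ∈ I, 0 < w j) ∧ (∀ j ∉ I, w j = 0) ∧
      ∑ j, w j = 1 ∧ ∑ j, w j • a j = x := by
  classical
  obtain ⟨w, hw₀, hwI, hw₁, hwx⟩ := (mem_convexHull_image_iff_exists_weights a I).mp hx
  refine ⟨w, fun j hj ↦ (hw₀ j).lt_of_ne fun hj0 ↦ ?_, hwI, hw₁, hwx⟩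
  refine hmin (I.erase j) (erase_ssubset hj)
    ((mem_convexHull_image_iff_exists_weights a _).mpr ⟨w, hw₀, fun k hk ↦ ?_, hw₁, hwx⟩)
  by_cases hkj : k = j
  · exact hkj ▸ hj0.symm
  · exact hwI k fun hkI ↦ hk (mem_erase.mpr ⟨hkj, hkI⟩)

theorem exists_affine_dependence_of_minimal_radon (a : ι → E) {Ip Im : Finset ι}
    (hdisj : Disjoint Ip Im)
    (hradon : (convexHull 𝕜 (a '' Ip) ∩ convexHull 𝕜 (a '' Im)).Nonempty)
    (hminm : ∀ I' ⊂ Im, convexHull 𝕜 (a '' Ip) ∩ convexHull 𝕜 (a '' I') = ∅)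
    (hminp : ∀ I' ⊂ Ip, convexHull 𝕜 (a '' I') ∩ convexHull 𝕜 (a '' Im) = ∅) :
    ∃ t : ι → 𝕜, ∑ j, t j = 0 ∧ ∑ j, t j • a j = 0 ∧ (∀ j ∈ Ip, 0 < t j) ∧
      (∀ j ∈ Im, t j < 0) ∧ (∀ j, j ∉ Ip → j ∉ Im → t j = 0) := by
  obtain ⟨x, hxp, hxm⟩ := hradon
  obtain ⟨l, hl₀, hlI, hl₁, hlx⟩ := exists_pos_weights_of_mem_convexHull_image a Ip hxp
    fun I' hI' hx ↦ (hminp I' hI').subset ⟨hx, hxm⟩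
  obtain ⟨m, hm₀, hmI, hm₁, hmx⟩ := exists_pos_weights_of_mem_convexHull_image a Im hxm
    fun I' hI' hx ↦ (hminm I' hI').subset ⟨hxp, hx⟩
  refine ⟨l - m, by simp [sum_sub_distrib, hl₁, hm₁],
    by simp [sub_smul, sum_sub_distrib, hlx, hmx], fun j hj ↦ ?_, fun j hj ↦ ?_,
    fun j hjp hjm ↦ by simp [hlI j hjp, hmI j hjm]⟩
  · simpa [hmI j (disjoint_left.mp hdisj hj)] using hl₀ j hj
  · simpa [hlI j (disjoint_right.mp hdisj hj)] using hm₀ j hj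

end ConvexWeights

theorem gale_radon_to_hyperplane_general (d n : ℕ)
    (a : Fin n → EuclideanSpace ℝ (Fin d))
    (b : Fin n → EuclideanSpace ℝ (Fin (n - d - 1)))
    (hgale : ∀ t : Fin n → ℝ,
      ((∑ j, t j = 0) ∧ (∑ j, t j • a j) = 0) ↔
        ∃ α : EuclideanSpace ℝ (Fin (n - d - 1)), ∀ j, t j = (inner ℝ (b j) α : ℝ))
    (Ip Im : Finset (Fin n)) (hIp : Ip.Nonempty)
    (hdisj : Disjoint Ip Im)
    (hradon : (convexHull ℝ (a '' ↑Ip) ∩ convexHull ℝ (a '' ↑Im)).Nonempty)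
    (hminm : ∀ I' : Finset (Fin n), I' ⊂ Im →
      convexHull ℝ (a '' ↑Ip) ∩ convexHull ℝ (a '' ↑I') = ∅)
    (hminp : ∀ I' : Finset (Fin n), I' ⊂ Ip →
      convexHull ℝ (a '' ↑I') ∩ convexHull ℝ (a '' ↑Im) = ∅) :
    ∃ α : EuclideanSpace ℝ (Fin (n - d - 1)), α ≠ 0 ∧
      (∀ j ∈ Ip, (inner ℝ (b j) α : ℝ) > 0) ∧
      (∀ j ∈ Im, (inner ℝ (b j) α : ℝ) < 0) ∧
      (∀ j, j ∉ Ip → j ∉ Im → (inner ℝ (b j) α : ℝ) = 0) := by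
  obtain ⟨t, ht₁, hta, hpos, hneg, hzero⟩ :=
    exists_affine_dependence_of_minimal_radon a hdisj hradon hminm hminp
  obtain ⟨α, hα⟩ := (hgale t).mp ⟨ht₁, hta⟩
  refine ⟨α, ?_, fun j hj ↦ hα j ▸ hpos j hj, fun j hj ↦ hα j ▸ hneg j hj,
    fun j hjp hjm ↦ hα j ▸ hzero j hjp hjm⟩
  rintro rfl
  obtain ⟨j, hj⟩ := hIp
  simpa [hα j] using hpos j hj

/-- **Gale duality, part (i).** If `(I⁺, I⁻)` is a minimal Radon pair for points
`a 1, …, a n` affinely spanning `ℝ^d` and `b` is a Gale dual of `a`, then there is a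
linear functional `⟪·, α⟫` strictly positive on `b '' I⁺`, strictly negative on `b '' I⁻`,
and vanishing on the remaining points. -/
theorem gale_radon_to_hyperplane (d n : ℕ) (hd : 1 ≤ d) (hn : d + 1 ≤ n)
    (a : Fin n → EuclideanSpace ℝ (Fin d))
    (b : Fin n → EuclideanSpace ℝ (Fin (n - d - 1)))
    (hspan : affineSpan ℝ (Set.range a) = ⊤)
    (hgale : ∀ t : Fin n → ℝ,
      ((∑ j, t j = 0) ∧ (∑ j, t j • a j) = 0) ↔
        ∃ α : EuclideanSpace ℝ (Fin (n - d - 1)), ∀ j, t j = (inner ℝ (b j) α : ℝ))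
    (Ip Im : Finset (Fin n)) (hIp : Ip.Nonempty) (hIm : Im.Nonempty)
    (hdisj : Disjoint Ip Im)
    (hradon : (convexHull ℝ (a '' ↑Ip) ∩ convexHull ℝ (a '' ↑Im)).Nonempty)
    (hminm : ∀ I' : Finset (Fin n), I' ⊂ Im →
      convexHull ℝ (a '' ↑Ip) ∩ convexHull ℝ (a '' ↑I') = ∅)
    (hminp : ∀ I' : Finset (Fin n), I' ⊂ Ip →
      convexHull ℝ (a '' ↑I') ∩ convexHull ℝ (a '' ↑Im) = ∅) :
    ∃ α : EuclideanSpace ℝ (Fin (n - d - 1)), α ≠ 0 ∧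
      (∀ j ∈ Ip, (inner ℝ (b j) α : ℝ) > 0) ∧
      (∀ j ∈ Im, (inner ℝ (b j) α : ℝ) < 0) ∧
      (∀ j, j ∉ Ip → j ∉ Im → (inner ℝ (b j) α : ℝ) = 0) :=
  gale_radon_to_hyperplane_general d n a b hgale Ip Im hIp hdisj hradon hminm hminp
end

section
/- Let d ≥ 1 and n ≥ d + 1. Let b_1, …, b_n ∈ ℝ^{n−d−1} be points that linearly span ℝ^{n−d−1} and satisfy ∑_{j=1}^n b_j = 0. Suppose there exist α ∈ ℝ^{n−d−1}, α ≠ 0, and nonempty disjoint subsets J⁺, J⁻ ⊆ [n] such that ⟪b_j, α⟫ > 0 for all j ∈ J⁺, ⟪b_j, α⟫ < 0 for all j ∈ J⁻, and ⟪b_j, α⟫ = 0 for all j ∉ J⁺ ∪ J⁻. Then there exist points a_1, …, a_n ∈ ℝ^d affinely spanning ℝ^d that form a Gale-dual pair with b_1, …, b_n, and nonempty subsets I⁺ ⊆ J⁺ and I⁻ ⊆ J⁻ such that (I⁺, I⁻) is a minimal Radon pair for a_1, …, a_n. -/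
/-!
The vectors `(⟪b j, β⟫)_j` form a subspace `W ⊆ ℝⁿ` of dimension `n - d - 1` inside the kernel of
the sum functional `σ`. Choosing a linear map `g : ℝⁿ → ℝᵈ` with `ker σ ∩ ker g = W` and putting
`a j = g (e j)` gives the Gale dual; `(σ, g)` is onto `ℝ × ℝᵈ` by counting dimensions, so the `a j`
affinely span `ℝᵈ`. The hyperplane `α` yields the affine dependence `t j = ⟪b j, α⟫` of the `a j`;
the centre of mass of the `a j` weighted by `t j` on `J⁺` equals the one weighted by `-t j` on
`J⁻`, and a pair of subsets minimal among those whose hulls meet is a minimal Radon pair.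
-/

open Module Set
open scoped InnerProductSpace

theorem Module.Dual.exists_ker_prod_eq {K V E : Type*} [Field K] [AddCommGroup V] [Module K V]
    [FiniteDimensional K V] [AddCommGroup E] [Module K E] [FiniteDimensional K E]
    (f : Dual K V) (hf : f ≠ 0) {W : Submodule K V} (hW : W ≤ LinearMap.ker f)
    (hdim : finrank K W + finrank K E + 1 = finrank K V) :
    ∃ g : V →ₗ[K] E, LinearMap.ker (f.prod g) = W := by
  let f' : Dual K (V ⧸ W) := W.liftQ f hW
  have hf' : f' ≠ 0 := fun h ↦ hf <| by rw [← W.liftQ_mkQ f hW]; exact congrArg (· ∘ₗ W.mkQ) h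
  have hker : finrank K (LinearMap.ker f') = finrank K E := by
    have := finrank_ker_add_one_of_ne_zero hf'
    have := W.finrank_quotient_add_finrank
    omega
  -- `π` retracts `V ⧸ W` onto the hyperplane `ker f'`, so `f'` and `π` vanish together only at `0`.
  obtain ⟨π, hπ⟩ := (LinearMap.ker f').subtype.exists_leftInverse_of_injective
    (LinearMap.ker f').ker_subtype
  refine ⟨(LinearEquiv.ofFinrankEq _ _ hker).toLinearMap ∘ₗ π ∘ₗ W.mkQ, ?_⟩
  rw [LinearMap.ker_prod]
  refine le_antisymm (fun v hv ↦ ?_) <|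
    le_inf hW fun w hw ↦ by simp [(Submodule.Quotient.mk_eq_zero W).2 hw]
  rw [Submodule.mem_inf, LinearMap.mem_ker, LinearMap.mem_ker] at hv
  have hq : W.mkQ v ∈ LinearMap.ker f' := hv.1
  have hπq : π (W.mkQ v) = 0 := by simpa using hv.2
  have : (⟨W.mkQ v, hq⟩ : LinearMap.ker f') = 0 := (LinearMap.congr_fun hπ _).symm.trans hπq
  simpa [Submodule.Quotient.mk_eq_zero] using congrArg Subtype.val this

section Gale

variable {ι E F : Type*} [Fintype ι] [AddCommGroup E] [Module ℝ E]
  [NormedAddCommGroup F] [InnerProductSpace ℝ F]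

def IsGaleDual (a : ι → E) (b : ι → F) : Prop :=
  ∀ t : ι → ℝ, (∑ j, t j = 0 ∧ ∑ j, t j • a j = 0) ↔ ∃ β : F, ∀ j, t j = ⟪b j, β⟫_ℝ

theorem exists_isGaleDual [FiniteDimensional ℝ E] [FiniteDimensional ℝ F] (b : ι → F)
    (hspan : Submodule.span ℝ (range b) = ⊤) (hsum : ∑ j, b j = 0)
    (hcard : finrank ℝ F + finrank ℝ E + 1 = Fintype.card ι) :
    ∃ a : ι → E, affineSpan ℝ (range a) = ⊤ ∧ IsGaleDual a b := by
  classical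
  let B : F →ₗ[ℝ] ι → ℝ := LinearMap.pi fun j ↦ innerₛₗ ℝ (b j)
  have hB : Function.Injective B := by
    refine (injective_iff_map_eq_zero B).2 fun β hβ ↦ inner_self_eq_zero (𝕜 := ℝ).1 ?_
    have : Submodule.span ℝ (range b) ≤ LinearMap.ker ((innerₗ F).flip β) :=
      Submodule.span_le.2 <| range_subset_iff.2 fun j ↦ congrFun hβ j
    exact (hspan ▸ this) Submodule.mem_top
  let σ : Dual ℝ (ι → ℝ) := Fintype.linearCombination ℝ fun _ ↦ 1
  have hσ (t : ι → ℝ) : σ t = ∑ j, t j := by simp [σ, Fintype.linearCombination_apply]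
  have hσ0 : σ ≠ 0 := by
    obtain ⟨j⟩ : Nonempty ι := Fintype.card_pos_iff.1 (by omega)
    exact fun h ↦ by simpa [σ] using LinearMap.congr_fun h (Pi.single j 1)
  have hBσ : LinearMap.range B ≤ LinearMap.ker σ := by
    rintro _ ⟨β, rfl⟩
    simp [hσ, B, ← sum_inner, hsum]
  obtain ⟨g, hg⟩ := σ.exists_ker_prod_eq (E := E) hσ0 hBσ <| by
    rwa [LinearMap.finrank_range_of_inj hB, finrank_fintype_fun_eq_card]
  let a : ι → E := fun j ↦ g (Pi.single j 1)
  have hga : Fintype.linearCombination ℝ a = g := by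
    ext j
    simp [a, Fintype.linearCombination_apply_single]
  have hgale : IsGaleDual a b := fun t ↦ by
    rw [← hσ, ← Fintype.linearCombination_apply, hga, ← Prod.mk_eq_zero]
    change t ∈ LinearMap.ker (σ.prod g) ↔ _
    rw [hg]
    simp [B, funext_iff, eq_comm]
  have hsurj : Function.Surjective (σ.prod g) := by
    refine LinearMap.range_eq_top.1 <| Submodule.eq_top_of_finrank_eq ?_
    have := LinearMap.finrank_range_add_finrank_ker (σ.prod g)
    rw [hg, LinearMap.finrank_range_of_inj hB, finrank_fintype_fun_eq_card] at this
    rw [finrank_prod, finrank_self]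
    omega
  refine ⟨a, eq_top_iff.2 fun x _ ↦ ?_, hgale⟩
  obtain ⟨t, ht⟩ := hsurj (1, x)
  have ht1 : ∑ j, t j = 1 := (hσ t).symm.trans (congrArg Prod.fst ht)
  have ht2 : ∑ j, t j • a j = x := by
    rw [← Fintype.linearCombination_apply, hga]; exact congrArg Prod.snd ht
  have := affineCombination_mem_affineSpan ht1 a
  rwa [Finset.affineCombination_eq_linear_combination _ _ _ ht1, ht2] at this

end Gale

section Radon

variable {ι E : Type*} [AddCommGroup E] [Module ℝ E]

theorem Finset.sum_eq_sum_add_sum_of_disjoint {M : Type*} [Fintype ι] [AddCommMonoid M]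
    {P N : Finset ι} (hPN : Disjoint P N) {f : ι → M} (hf : ∀ j, j ∉ P → j ∉ N → f j = 0) :
    ∑ j, f j = ∑ j ∈ P, f j + ∑ j ∈ N, f j := by
  classical
  rw [← Finset.sum_union hPN]
  refine (Finset.sum_subset (Finset.subset_univ _) fun j _ hj ↦ ?_).symm
  rw [Finset.mem_union, not_or] at hj
  exact hf j hj.1 hj.2

theorem convexHull_inter_nonempty_of_sum_eq_zero [Fintype ι] {a : ι → E} {t : ι → ℝ}
    {P N : Finset ι} (hPN : Disjoint P N) (hP : ∀ j ∈ P, 0 < t j) (hN : ∀ j ∈ N, t j < 0)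
    (h0 : ∀ j, j ∉ P → j ∉ N → t j = 0) (hPne : P.Nonempty)
    (hsum : ∑ j, t j = 0) (hcomb : ∑ j, t j • a j = 0) :
    (convexHull ℝ (a '' P) ∩ convexHull ℝ (a '' N)).Nonempty := by
  rw [Finset.sum_eq_sum_add_sum_of_disjoint hPN h0] at hsum
  rw [Finset.sum_eq_sum_add_sum_of_disjoint hPN fun j hjP hjN ↦ by simp [h0 j hjP hjN]] at hcomb
  have hpos : 0 < ∑ j ∈ P, t j := Finset.sum_pos hP hPne
  have hweight : ∑ j ∈ N, -t j = ∑ j ∈ P, t j := by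
    rw [Finset.sum_neg_distrib]; linarith
  have hcenter : P.centerMass t a = N.centerMass (-t) a := by
    simp only [Finset.centerMass, Pi.neg_apply, hweight, neg_smul, Finset.sum_neg_distrib,
      neg_eq_of_add_eq_zero_left hcomb]
  refine ⟨P.centerMass t a, ?_, hcenter ▸ ?_⟩
  · exact P.centerMass_mem_convexHull (fun j hj ↦ (hP j hj).le) hpos
      fun j hj ↦ mem_image_of_mem a hj
  · exact N.centerMass_mem_convexHull (fun j hj ↦ (neg_pos.2 (hN j hj)).le) (hweight ▸ hpos)
      fun j hj ↦ mem_image_of_mem a hj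

theorem exists_minimal_radon_pair (a : ι → E) {Jp Jm : Finset ι}
    (h : (convexHull ℝ (a '' Jp) ∩ convexHull ℝ (a '' Jm)).Nonempty) :
    ∃ Ip ⊆ Jp, ∃ Im ⊆ Jm, Ip.Nonempty ∧ Im.Nonempty ∧
      (convexHull ℝ (a '' Ip) ∩ convexHull ℝ (a '' Im)).Nonempty ∧
      (∀ I' : Finset ι, I' ⊂ Im → convexHull ℝ (a '' Ip) ∩ convexHull ℝ (a '' I') = ∅) ∧
      (∀ I' : Finset ι, I' ⊂ Ip → convexHull ℝ (a '' I') ∩ convexHull ℝ (a '' Im) = ∅) := by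
  obtain ⟨⟨Ip, Im⟩, ⟨hIp, hIm⟩, hmin⟩ := exists_minimal_le_of_wellFoundedLT
    (fun q : Finset ι × Finset ι ↦ (convexHull ℝ (a '' q.1) ∩ convexHull ℝ (a '' q.2)).Nonempty)
    (Jp, Jm) h
  obtain ⟨x, hxp, hxm⟩ := hmin.prop
  refine ⟨Ip, hIp, Im, hIm, ?_, ?_, hmin.prop, fun I' hI' ↦ ?_, fun I' hI' ↦ ?_⟩
  · exact Finset.coe_nonempty.1 <| image_nonempty.1 <| convexHull_nonempty_iff.1 ⟨x, hxp⟩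
  · exact Finset.coe_nonempty.1 <| image_nonempty.1 <| convexHull_nonempty_iff.1 ⟨x, hxm⟩
  · simpa [← not_nonempty_iff_eq_empty] using hmin.not_prop_of_lt (Prod.mk_lt_mk_iff_right.2 hI')
  · simpa [← not_nonempty_iff_eq_empty] using hmin.not_prop_of_lt (Prod.mk_lt_mk_iff_left.2 hI')

end Radon

theorem gale_hyperplane_to_radon_general (d n : ℕ) (hn : d + 1 ≤ n)
    (b : Fin n → EuclideanSpace ℝ (Fin (n - d - 1)))
    (hbspan : Submodule.span ℝ (Set.range b) = ⊤)
    (hbsum : (∑ j, b j) = 0)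
    (α : EuclideanSpace ℝ (Fin (n - d - 1)))
    (Jp Jm : Finset (Fin n)) (hJp : Jp.Nonempty)
    (hJdisj : Disjoint Jp Jm)
    (hp : ∀ j ∈ Jp, (inner ℝ (b j) α : ℝ) > 0)
    (hm : ∀ j ∈ Jm, (inner ℝ (b j) α : ℝ) < 0)
    (h0 : ∀ j, j ∉ Jp → j ∉ Jm → (inner ℝ (b j) α : ℝ) = 0) :
    ∃ a : Fin n → EuclideanSpace ℝ (Fin d),
      affineSpan ℝ (Set.range a) = ⊤ ∧
      (∀ t : Fin n → ℝ,
        ((∑ j, t j = 0) ∧ (∑ j, t j • a j) = 0) ↔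
          ∃ β : EuclideanSpace ℝ (Fin (n - d - 1)), ∀ j, t j = (inner ℝ (b j) β : ℝ)) ∧
      ∃ Ip ⊆ Jp, ∃ Im ⊆ Jm, Ip.Nonempty ∧ Im.Nonempty ∧ Disjoint Ip Im ∧
        (convexHull ℝ (a '' ↑Ip) ∩ convexHull ℝ (a '' ↑Im)).Nonempty ∧
        (∀ I' : Finset (Fin n), I' ⊂ Im →
          convexHull ℝ (a '' ↑Ip) ∩ convexHull ℝ (a '' ↑I') = ∅) ∧
        (∀ I' : Finset (Fin n), I' ⊂ Ip →
          convexHull ℝ (a '' ↑I') ∩ convexHull ℝ (a '' ↑Im) = ∅) := by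
  obtain ⟨a, hspan, hgale⟩ := exists_isGaleDual (E := EuclideanSpace ℝ (Fin d)) b hbspan hbsum
    (by simp only [finrank_euclideanSpace_fin, Fintype.card_fin]; omega)
  obtain ⟨hsum, hcomb⟩ := (hgale fun j ↦ ⟪b j, α⟫_ℝ).2 ⟨α, fun _ ↦ rfl⟩
  obtain ⟨Ip, hIp, Im, hIm, hIp0, hIm0, hint, hminm, hminp⟩ := exists_minimal_radon_pair a
    (convexHull_inter_nonempty_of_sum_eq_zero hJdisj hp hm h0 hJp hsum hcomb)
  exact ⟨a, hspan, hgale, Ip, hIp, Im, hIm, hIp0, hIm0, hJdisj.mono hIp hIm, hint, hminm, hminp⟩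

/-- **Gale duality, part (ii).** If points `b 1, …, b n` linearly span `ℝ^{n-d-1}`, sum to
zero, and are separated by a linear hyperplane `⟪·, α⟫ = 0` into parts indexed by `J⁺` and
`J⁻` (with all remaining points on the hyperplane), then there exist points
`a 1, …, a n` affinely spanning `ℝ^d`, Gale dual to `b`, together with nonempty subsets
`I⁺ ⊆ J⁺` and `I⁻ ⊆ J⁻` forming a minimal Radon pair for `a`. -/
theorem gale_hyperplane_to_radon (d n : ℕ) (hd : 1 ≤ d) (hn : d + 1 ≤ n)
    (b : Fin n → EuclideanSpace ℝ (Fin (n - d - 1)))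
    (hbspan : Submodule.span ℝ (Set.range b) = ⊤)
    (hbsum : (∑ j, b j) = 0)
    (α : EuclideanSpace ℝ (Fin (n - d - 1))) (hα : α ≠ 0)
    (Jp Jm : Finset (Fin n)) (hJp : Jp.Nonempty) (hJm : Jm.Nonempty)
    (hJdisj : Disjoint Jp Jm)
    (hp : ∀ j ∈ Jp, (inner ℝ (b j) α : ℝ) > 0)
    (hm : ∀ j ∈ Jm, (inner ℝ (b j) α : ℝ) < 0)
    (h0 : ∀ j, j ∉ Jp → j ∉ Jm → (inner ℝ (b j) α : ℝ) = 0) :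
    ∃ a : Fin n → EuclideanSpace ℝ (Fin d),
      affineSpan ℝ (Set.range a) = ⊤ ∧
      (∀ t : Fin n → ℝ,
        ((∑ j, t j = 0) ∧ (∑ j, t j • a j) = 0) ↔
          ∃ β : EuclideanSpace ℝ (Fin (n - d - 1)), ∀ j, t j = (inner ℝ (b j) β : ℝ)) ∧
      ∃ Ip ⊆ Jp, ∃ Im ⊆ Jm, Ip.Nonempty ∧ Im.Nonempty ∧ Disjoint Ip Im ∧
        (convexHull ℝ (a '' ↑Ip) ∩ convexHull ℝ (a '' ↑Im)).Nonempty ∧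
        (∀ I' : Finset (Fin n), I' ⊂ Im →
          convexHull ℝ (a '' ↑Ip) ∩ convexHull ℝ (a '' ↑I') = ∅) ∧
        (∀ I' : Finset (Fin n), I' ⊂ Ip →
          convexHull ℝ (a '' ↑I') ∩ convexHull ℝ (a '' ↑Im) = ∅) :=
  gale_hyperplane_to_radon_general d n hn b hbspan hbsum α Jp Jm hJp hJdisj hp hm h0
end

section
/- Let c ≥ 1, k ≥ 1, and m ≥ 1 be integers. Suppose that for every d ≥ 1 and every n ≥ d + c + 2 the following holds: for any linear map f : Δ_{n−1} → ℝ^d and any family F of nonempty subsets of [n] with χ(KG^{2^k}(F)) ≤ m, there exist k minimal Radon pairs (σ_1⁺, σ_1⁻), …, (σ_k⁺, σ_k⁻) for f such that for every choice of signs ε ∈ {+,−}^k the intersection σ_1^{ε_1} ∩ ⋯ ∩ σ_k^{ε_k} contains no set from F. Then for any finite family F of polytopes in ℝ^{c+1} with χ(KG^{2^k}(F)) ≤ m, there exist k linear hyperplanes (hyperplanes through the origin) in ℝ^{c+1} whose union intersects every polytope of F. -/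
/-- The face `Δ_σ` of the standard simplex spanned by the vertices in `σ`. -/
def simplexFace {n : ℕ} (σ : Finset (Fin n)) : Set (Fin n → ℝ) :=
  {x | x ∈ stdSimplex ℝ (Fin n) ∧ ∀ i, i ∉ σ → x i = 0}

/-- `(σp, σm)` is a Radon pair for `f`: the faces are disjoint and their images intersect. -/
def IsRadonPair {n d : ℕ} (f : (Fin n → ℝ) → EuclideanSpace ℝ (Fin d))
    (σp σm : Finset (Fin n)) : Prop :=
  Disjoint σp σm ∧ (f '' simplexFace σp ∩ f '' simplexFace σm).Nonempty

/-- A minimal Radon pair: a Radon pair such that the image of neither face meets the image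
of any proper subface of the other. -/
def IsMinimalRadonPair {n d : ℕ} (f : (Fin n → ℝ) → EuclideanSpace ℝ (Fin d))
    (σp σm : Finset (Fin n)) : Prop :=
  IsRadonPair f σp σm ∧
    (∀ τ : Finset (Fin n), τ ⊂ σm → f '' simplexFace σp ∩ f '' simplexFace τ = ∅) ∧
    (∀ τ : Finset (Fin n), τ ⊂ σp → f '' simplexFace τ ∩ f '' simplexFace σm = ∅)

/-- `χ(KG^r(F)) ≤ m`: `F` can be colored with `m` colors so that no color class contains
`r` pairwise disjoint members. -/
def KneserChromaticLe {n : ℕ} (F : Finset (Finset (Fin n))) (r m : ℕ) : Prop :=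
  ∃ c : Finset (Fin n) → Fin m, ∀ G ⊆ F,
    (∀ A ∈ G, ∀ B ∈ G, A ≠ B → Disjoint A B) →
    (∀ A ∈ G, ∀ B ∈ G, c A = c B) → G.card < r

/-!
Gale duality turns linear hyperplanes into Radon pairs. List a point of every nonempty
intersection `conv P ∩ conv Q` (`P, Q ∈ F`, possibly equal) followed by a basis of
`ℝ^{c+1}` as `p₀, …, p_{n-1}`, and let `g` be a linear map on `ℝ^{n+1}` whose kernel is
`{(⟪a, p₀⟫, …, ⟪a, p_{n-1}⟫, s)}`; the basis makes this kernel `(c+2)`-dimensional, so the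
target has the dimension `n - c - 1` required by the hypothesis. If `λ ∈ Δ_{σ⁺}` and
`μ ∈ Δ_{σ⁻}` have the same image, `λ - μ` lies in the kernel, has coordinate sum zero (which
forces `a ≠ 0`), and its sign pattern puts every `p_i` with `⟪a, p_i⟫ > 0` in `σ⁺` and every
one with `⟪a, p_i⟫ < 0` in `σ⁻`. Encode each polytope by the indices of the listed points in
its hull: intersecting hulls share a listed point, so the Kneser colouring transfers. A
polytope missing all `k` hyperplanes `a_j^⊥` has a constant sign `ε_j` of `⟪a_j, ·⟫` on its
hull, so its index set lies in `σ_1^{ε_1} ∩ ⋯ ∩ σ_k^{ε_k}`, which the hypothesis forbids.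
-/

open Finset
open scoped RealInnerProductSpace

theorem IsPreconnected.pos_iff_pos_of_ne_zero {X : Type*} [TopologicalSpace X] {S : Set X}
    {f : X → ℝ} (hS : IsPreconnected S) (hf : ContinuousOn f S) (h0 : ∀ x ∈ S, f x ≠ 0)
    {x y : X} (hx : x ∈ S) (hy : y ∈ S) : 0 < f x ↔ 0 < f y := by
  suffices key : ∀ x ∈ S, ∀ y ∈ S, 0 < f x → 0 < f y from ⟨key x hx y hy, key y hy x hx⟩
  intro x hx y hy hfx
  by_contra! hfy
  obtain ⟨z, hz, hfz⟩ := hS.intermediate_value hy hx hf ⟨hfy, hfx.le⟩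
  exact h0 z hz hfz

theorem Finset.exists_finset_inter_nonempty {α κ : Type*} (s : Finset κ) (T : κ → Set α) :
    ∃ E : Finset α, ∀ k ∈ s, (T k).Nonempty → ((E : Set α) ∩ T k).Nonempty := by
  classical
  refine ⟨s.biUnion fun k => if h : (T k).Nonempty then {h.some} else ∅, fun k hk h => ?_⟩
  exact ⟨h.some, mem_biUnion.2 ⟨k, hk, by simp [h]⟩, h.some_mem⟩

theorem Submodule.exists_linearMap_ker_eq {K W U : Type*} [DivisionRing K] [AddCommGroup W]
    [Module K W] [AddCommGroup U] [Module K U] [FiniteDimensional K W] [FiniteDimensional K U]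
    (N : Submodule K W)
    (h : Module.finrank K N + Module.finrank K U = Module.finrank K W) :
    ∃ g : W →ₗ[K] U, LinearMap.ker g = N := by
  have hq : Module.finrank K (W ⧸ N) = Module.finrank K U := by
    have := N.finrank_quotient_add_finrank
    omega
  exact ⟨(LinearEquiv.ofFinrankEq _ _ hq).toLinearMap ∘ₗ N.mkQ, by
    rw [LinearEquiv.ker_comp, Submodule.ker_mkQ]⟩

theorem mem_of_pos_of_mem_simplexFace {n : ℕ} {σ : Finset (Fin n)} {x : Fin n → ℝ}
    (hx : x ∈ simplexFace σ) {i : Fin n} (hi : 0 < x i) : i ∈ σ := by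
  by_contra h
  exact hi.ne' (hx.2 i h)

theorem IsRadonPair.exists_mem_ker {n d : ℕ} {g : (Fin n → ℝ) →ₗ[ℝ] EuclideanSpace ℝ (Fin d)}
    {σp σm : Finset (Fin n)} (h : IsRadonPair g σp σm) :
    ∃ z ∈ LinearMap.ker g, z ≠ 0 ∧ ∑ i, z i = 0 ∧
      ∀ i, (0 < z i → i ∈ σp) ∧ (z i < 0 → i ∈ σm) := by
  obtain ⟨hdisj, _, ⟨x, hx, rfl⟩, ⟨y, hy, hxy⟩⟩ := h
  have hx₀ := hx.1.1
  have hy₀ := hy.1.1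
  refine ⟨x - y, by simp [hxy], ?_, ?_, fun i => ⟨fun hi => ?_, fun hi => ?_⟩⟩
  · intro hxy
    obtain ⟨i, -, hi⟩ := exists_lt_of_sum_lt (by simp [hx.1.2] : ∑ i, (0 : ℝ) < ∑ i, x i)
    have hyi : 0 < y i := by rwa [← sub_eq_zero.1 hxy]
    exact disjoint_left.1 hdisj (mem_of_pos_of_mem_simplexFace hx hi)
      (mem_of_pos_of_mem_simplexFace hy hyi)
  · simp [sum_sub_distrib, hx.1.2, hy.1.2]
  · exact mem_of_pos_of_mem_simplexFace hx (by linarith [hy₀ i, sub_pos.1 hi])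
  · exact mem_of_pos_of_mem_simplexFace hy (by linarith [hx₀ i, sub_neg.1 hi])

section Gale

variable {V : Type*} [NormedAddCommGroup V] [InnerProductSpace ℝ V] {n : ℕ}

/-- The slack coordinate `Fin.last n` absorbs the constraint `∑ i, z i = 0` met by differences
of points of the simplex; this is why the normals obtained below give linear hyperplanes. -/
def galeLift (p : Fin n → V) : V × ℝ →ₗ[ℝ] (Fin (n + 1) → ℝ) where
  toFun w := Fin.snoc (fun i => ⟪w.1, p i⟫) w.2
  map_add' u v := by
    ext i
    induction i using Fin.lastCases <;> simp [inner_add_left]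
  map_smul' r u := by
    ext i
    induction i using Fin.lastCases <;> simp [real_inner_smul_left]

@[simp] theorem galeLift_apply_castSucc (p : Fin n → V) (w : V × ℝ) (i : Fin n) :
    galeLift p w i.castSucc = ⟪w.1, p i⟫ := by
  simp [galeLift]

@[simp] theorem galeLift_apply_last (p : Fin n → V) (w : V × ℝ) :
    galeLift p w (Fin.last n) = w.2 := by
  simp [galeLift]

theorem galeLift_injective {p : Fin n → V} (hp : Submodule.span ℝ (Set.range p) = ⊤) :
    Function.Injective (galeLift p) := by
  rw [← LinearMap.ker_eq_bot, LinearMap.ker_eq_bot']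
  rintro ⟨a, s⟩ h
  have hs : s = 0 := by simpa using congrFun h (Fin.last n)
  have ha : innerₛₗ ℝ a = 0 :=
    LinearMap.ext_on_range hp fun i => by simpa using congrFun h i.castSucc
  simp [hs, inner_self_eq_zero.1 (LinearMap.congr_fun ha a)]

theorem finrank_range_galeLift [FiniteDimensional ℝ V] {p : Fin n → V}
    (hp : Submodule.span ℝ (Set.range p) = ⊤) :
    Module.finrank ℝ (LinearMap.range (galeLift p)) = Module.finrank ℝ V + 1 := by
  rw [LinearMap.finrank_range_of_inj (galeLift_injective hp), Module.finrank_prod,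
    Module.finrank_self]

theorem exists_ne_zero_of_mem_range_galeLift {p : Fin n → V} {z : Fin (n + 1) → ℝ}
    (hz : z ∈ LinearMap.range (galeLift p)) (hz0 : z ≠ 0) (hsum : ∑ i, z i = 0) :
    ∃ a : V, a ≠ 0 ∧ ∀ i, z i.castSucc = ⟪a, p i⟫ := by
  obtain ⟨⟨a, s⟩, rfl⟩ := hz
  refine ⟨a, fun ha => hz0 ?_, fun i => galeLift_apply_castSucc p _ i⟩
  have hs : s = 0 := by simpa [Fin.sum_univ_castSucc, ha] using hsum
  rw [ha, hs, Prod.mk_zero_zero, map_zero]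

theorem IsRadonPair.exists_normal_of_ker_le {d : ℕ} {p : Fin n → V}
    {g : (Fin (n + 1) → ℝ) →ₗ[ℝ] EuclideanSpace ℝ (Fin d)}
    (hg : LinearMap.ker g ≤ LinearMap.range (galeLift p)) {σp σm : Finset (Fin (n + 1))}
    (h : IsRadonPair g σp σm) :
    ∃ a : V, a ≠ 0 ∧
      ∀ i, (0 < ⟪a, p i⟫ → i.castSucc ∈ σp) ∧ (⟪a, p i⟫ < 0 → i.castSucc ∈ σm) := by
  obtain ⟨z, hzg, hz0, hsum, hsign⟩ := h.exists_mem_ker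
  obtain ⟨a, ha0, hza⟩ := exists_ne_zero_of_mem_range_galeLift (hg hzg) hz0 hsum
  exact ⟨a, ha0, fun i => by simpa only [hza] using hsign i.castSucc⟩

end Gale

theorem kneserChromaticLe_image {α : Type*} [Nonempty α] {n r m : ℕ} {F : Finset α}
    {φ : α → Finset (Fin n)} {D : α → α → Prop}
    (hD : ∀ P ∈ F, ∀ Q ∈ F, Disjoint (φ P) (φ Q) → D P Q)
    (hχ : ∃ cc : α → Fin m, ∀ G ⊆ F, (∀ P ∈ G, ∀ Q ∈ G, P ≠ Q → D P Q) →
      (∀ P ∈ G, ∀ Q ∈ G, cc P = cc Q) → G.card < r) :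
    KneserChromaticLe (F.image φ) r m := by
  classical
  obtain ⟨cc, hcc⟩ := hχ
  set ψ := Function.invFunOn φ F
  refine ⟨cc ∘ ψ, fun G hG hdisj hmono => ?_⟩
  have hψ : ∀ A ∈ G, ψ A ∈ F ∧ φ (ψ A) = A := fun A hA => by
    have hA' : ∃ P ∈ F, φ P = A := by simpa using hG hA
    exact ⟨Function.invFunOn_mem hA', Function.invFunOn_eq hA'⟩
  have hinj : Set.InjOn ψ G := fun A hA B hB hAB => by
    rw [← (hψ A hA).2, ← (hψ B hB).2, hAB]
  rw [← card_image_of_injOn hinj]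
  refine hcc _ (fun P hP => ?_) (fun P hP Q hQ hPQ => ?_) (fun P hP Q hQ => ?_)
  · obtain ⟨A, hA, rfl⟩ := mem_image.1 hP
    exact (hψ A hA).1
  · obtain ⟨A, hA, rfl⟩ := mem_image.1 hP
    obtain ⟨B, hB, rfl⟩ := mem_image.1 hQ
    refine hD _ (hψ A hA).1 _ (hψ B hB).1 ?_
    rw [(hψ A hA).2, (hψ B hB).2]
    exact hdisj A hA B hB (by rintro rfl; exact hPQ rfl)
  · obtain ⟨A, hA, rfl⟩ := mem_image.1 hP
    obtain ⟨B, hB, rfl⟩ := mem_image.1 hQ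
    exact hmono A hA B hB

section HullIndices

variable {V : Type*} [NormedAddCommGroup V] [InnerProductSpace ℝ V]

def HitsHullIntersections {ι : Type*} (p : ι → V) (F : Finset (Finset V)) : Prop :=
  ∀ P ∈ F, ∀ Q ∈ F, (convexHull ℝ (P : Set V) ∩ convexHull ℝ (Q : Set V)).Nonempty →
    ∃ i, p i ∈ convexHull ℝ (P : Set V) ∩ convexHull ℝ (Q : Set V)

theorem exists_spanning_hitsHullIntersections [FiniteDimensional ℝ V] (F : Finset (Finset V)) :
    ∃ (t : ℕ) (p : Fin (t + Module.finrank ℝ V) → V),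
      Submodule.span ℝ (Set.range p) = ⊤ ∧ HitsHullIntersections (p ∘ Fin.castAdd _) F := by
  obtain ⟨E, hE⟩ := (F ×ˢ F).exists_finset_inter_nonempty fun PQ =>
    convexHull ℝ (PQ.1 : Set V) ∩ convexHull ℝ (PQ.2 : Set V)
  let b := Module.finBasis ℝ V
  refine ⟨E.card, Fin.append (fun i => E.equivFin.symm i) b, ?_, fun P hP Q hQ hPQ => ?_⟩
  · refine eq_top_iff.2 (b.span_eq.ge.trans (Submodule.span_mono ?_))
    rintro _ ⟨i, rfl⟩
    exact ⟨Fin.natAdd _ i, Fin.append_right _ _ i⟩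
  · obtain ⟨x, hxE, hx⟩ := hE (P, Q) (mem_product.2 ⟨hP, hQ⟩) hPQ
    exact ⟨E.equivFin ⟨x, hxE⟩, by simpa using hx⟩

variable {n : ℕ}

open scoped Classical in
noncomputable def hullIndices (p : Fin n → V) (P : Finset V) : Finset (Fin (n + 1)) :=
  (univ.filter fun i : Fin n => p i ∈ convexHull ℝ (P : Set V)).map Fin.castSuccEmb

theorem castSucc_mem_hullIndices {p : Fin n → V} {P : Finset V} {i : Fin n} :
    i.castSucc ∈ hullIndices p P ↔ p i ∈ convexHull ℝ (P : Set V) := by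
  simp [hullIndices]

theorem HitsHullIntersections.nonempty_of_mem_image_hullIndices {p : Fin n → V}
    {F : Finset (Finset V)} (hp : HitsHullIntersections p F) (hF : ∀ P ∈ F, P.Nonempty) :
    ∀ A ∈ F.image (hullIndices p), A.Nonempty := by
  refine forall_mem_image.2 fun P hP => ?_
  obtain ⟨i, hi, -⟩ := hp P hP P hP (by simpa using hF P hP)
  exact ⟨i.castSucc, castSucc_mem_hullIndices.2 hi⟩

theorem HitsHullIntersections.kneserChromaticLe_image_hullIndices {p : Fin n → V}
    {F : Finset (Finset V)} {r m : ℕ} (hp : HitsHullIntersections p F)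
    (hχ : ∃ cc : Finset V → Fin m, ∀ G ⊆ F,
      (∀ P ∈ G, ∀ Q ∈ G, P ≠ Q →
        Disjoint (convexHull ℝ (P : Set V)) (convexHull ℝ (Q : Set V))) →
      (∀ P ∈ G, ∀ Q ∈ G, cc P = cc Q) → G.card < r) :
    KneserChromaticLe (F.image (hullIndices p)) r m := by
  refine kneserChromaticLe_image (fun P hP Q hQ => not_imp_not.1 fun h => ?_) hχ
  obtain ⟨i, hiP, hiQ⟩ := hp P hP Q hQ (Set.not_disjoint_iff_nonempty_inter.1 h)
  exact not_disjoint_iff.2 ⟨i.castSucc, castSucc_mem_hullIndices.2 hiP,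
    castSucc_mem_hullIndices.2 hiQ⟩

theorem hullIndices_subset_of_inner_ne_zero {p : Fin n → V} {P : Finset V} {a : V}
    {σp σm : Finset (Fin (n + 1))}
    (ha : ∀ i, (0 < ⟪a, p i⟫ → i.castSucc ∈ σp) ∧ (⟪a, p i⟫ < 0 → i.castSucc ∈ σm))
    (hP : ∀ x ∈ convexHull ℝ (P : Set V), ⟪a, x⟫ ≠ 0) {x₀ : V}
    (hx₀ : x₀ ∈ convexHull ℝ (P : Set V)) :
    hullIndices p P ⊆ if 0 < ⟪a, x₀⟫ then σp else σm := by
  intro _ hj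
  obtain ⟨i, -, rfl⟩ := Finset.mem_map.1 hj
  have hi : p i ∈ convexHull ℝ (P : Set V) := castSucc_mem_hullIndices.1 hj
  have hsign : 0 < ⟪a, x₀⟫ ↔ 0 < ⟪a, p i⟫ :=
    (convex_convexHull ℝ _).isPreconnected.pos_iff_pos_of_ne_zero
      (continuous_const.inner continuous_id).continuousOn hP hx₀ hi
  split_ifs with h
  · exact (ha i).1 (hsign.1 h)
  · exact (ha i).2 ((not_lt.1 (mt hsign.2 h)).lt_of_ne (hP _ hi))

end HullIndices

theorem radon_pairs_to_linear_transversal_general (c k m : ℕ)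
    (hyp : ∀ d : ℕ, 1 ≤ d → ∀ n : ℕ, d + c + 2 ≤ n →
      ∀ f : (Fin n → ℝ) →ᵃ[ℝ] EuclideanSpace ℝ (Fin d),
      ∀ F : Finset (Finset (Fin n)), (∀ A ∈ F, A.Nonempty) →
        KneserChromaticLe F (2 ^ k) m →
        ∃ σp σm : Fin k → Finset (Fin n),
          (∀ j, IsMinimalRadonPair (⇑f) (σp j) (σm j)) ∧
          ∀ ε : Fin k → Bool, ∀ A ∈ F,
            ¬A ⊆ Finset.univ.inf (fun j => if ε j then σp j else σm j))
    (F : Finset (Finset (EuclideanSpace ℝ (Fin (c + 1)))))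
    (hne : ∀ P ∈ F, P.Nonempty)
    (hχ : ∃ cc : Finset (EuclideanSpace ℝ (Fin (c + 1))) → Fin m, ∀ G ⊆ F,
      (∀ P ∈ G, ∀ Q ∈ G, P ≠ Q →
        Disjoint (convexHull ℝ (P : Set (EuclideanSpace ℝ (Fin (c + 1)))))
          (convexHull ℝ (Q : Set (EuclideanSpace ℝ (Fin (c + 1)))))) →
      (∀ P ∈ G, ∀ Q ∈ G, cc P = cc Q) → G.card < 2 ^ k) :
    ∃ a : Fin k → EuclideanSpace ℝ (Fin (c + 1)),
      (∀ j, a j ≠ 0) ∧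
      ∀ P ∈ F, ∃ x ∈ convexHull ℝ (P : Set (EuclideanSpace ℝ (Fin (c + 1)))),
        ∃ j : Fin k, (inner ℝ (a j) x : ℝ) = 0 := by
  rcases F.eq_empty_or_nonempty with rfl | ⟨P₀, hP₀⟩
  · exact ⟨fun _ => EuclideanSpace.single 0 1, fun _ => by simp, by simp⟩
  obtain ⟨t, p, hp, hpF⟩ := exists_spanning_hitsHullIntersections F
  have hpF' : HitsHullIntersections p F := fun P hP Q hQ hPQ =>
    let ⟨i, hi⟩ := hpF P hP Q hQ hPQ; ⟨_, hi⟩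
  have ht : 1 ≤ t := (hpF P₀ hP₀ P₀ hP₀ (by simpa using hne P₀ hP₀)).choose.pos
  obtain ⟨g, hg⟩ := (LinearMap.range (galeLift p)).exists_linearMap_ker_eq
    (U := EuclideanSpace ℝ (Fin t)) (by simp [finrank_range_galeLift hp]; ring)
  obtain ⟨σp, σm, hmin, hcov⟩ := hyp t ht _ (by simp) g.toAffineMap (F.image (hullIndices p))
    (hpF'.nonempty_of_mem_image_hullIndices hne)
    (hpF'.kneserChromaticLe_image_hullIndices hχ)
  choose a ha0 ha using fun j => (hmin j).1.exists_normal_of_ker_le hg.le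
  refine ⟨a, ha0, fun P hP => ?_⟩
  by_contra! hmiss
  obtain ⟨x₀, hx₀⟩ := hne P hP
  refine hcov (fun j => 0 < ⟪a j, x₀⟫) _ (mem_image_of_mem _ hP) (Finset.le_inf fun j _ => ?_)
  simpa using hullIndices_subset_of_inner_ne_zero (ha j) (fun x hx => hmiss x hx j)
    (subset_convexHull ℝ _ hx₀)

/-- **Radon pairs imply linear hyperplane transversals.** Suppose that for all `d ≥ 1` and
`n ≥ d + c + 2`, every linear (affine) map `f : Δ_{n-1} → ℝ^d` and every family `F` of
nonempty subsets of `[n]` with `χ(KG^(2^k)(F)) ≤ m` admit `k` minimal Radon pairs none of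
whose sign-intersections contains a member of `F`. Then every finite family of polytopes in
`ℝ^{c+1}` with `χ(KG^(2^k)(F)) ≤ m` is pierced by `k` linear hyperplanes. -/
theorem radon_pairs_to_linear_transversal (c k m : ℕ) (hc : 1 ≤ c) (hk : 1 ≤ k)
    (hm : 1 ≤ m)
    (hyp : ∀ d : ℕ, 1 ≤ d → ∀ n : ℕ, d + c + 2 ≤ n →
      ∀ f : (Fin n → ℝ) →ᵃ[ℝ] EuclideanSpace ℝ (Fin d),
      ∀ F : Finset (Finset (Fin n)), (∀ A ∈ F, A.Nonempty) →
        KneserChromaticLe F (2 ^ k) m →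
        ∃ σp σm : Fin k → Finset (Fin n),
          (∀ j, IsMinimalRadonPair (⇑f) (σp j) (σm j)) ∧
          ∀ ε : Fin k → Bool, ∀ A ∈ F,
            ¬A ⊆ Finset.univ.inf (fun j => if ε j then σp j else σm j))
    (F : Finset (Finset (EuclideanSpace ℝ (Fin (c + 1)))))
    (hne : ∀ P ∈ F, P.Nonempty)
    (hχ : ∃ cc : Finset (EuclideanSpace ℝ (Fin (c + 1))) → Fin m, ∀ G ⊆ F,
      (∀ P ∈ G, ∀ Q ∈ G, P ≠ Q →
        Disjoint (convexHull ℝ (P : Set (EuclideanSpace ℝ (Fin (c + 1)))))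
          (convexHull ℝ (Q : Set (EuclideanSpace ℝ (Fin (c + 1)))))) →
      (∀ P ∈ G, ∀ Q ∈ G, cc P = cc Q) → G.card < 2 ^ k) :
    ∃ a : Fin k → EuclideanSpace ℝ (Fin (c + 1)),
      (∀ j, a j ≠ 0) ∧
      ∀ P ∈ F, ∃ x ∈ convexHull ℝ (P : Set (EuclideanSpace ℝ (Fin (c + 1)))),
        ∃ j : Fin k, (inner ℝ (a j) x : ℝ) = 0 :=
  radon_pairs_to_linear_transversal_general c k m hyp F hne hχ
end

section
/- Let c ≥ 1, k ≥ 1, and m ≥ 1 be integers. Suppose that for any finite family G of polytopes in ℝ^{c+1} with χ(KG^{2^k}(G)) ≤ m there exist k linear hyperplanes (hyperplanes through the origin) in ℝ^{c+1} whose union intersects every polytope of G. Then for every d ≥ 1, every n ≥ d + c + 2, every linear map f : Δ_{n−1} → ℝ^d, and every family F of nonempty subsets of [n] with χ(KG^{2^k}(F)) ≤ m, there exist k minimal Radon pairs (σ_1⁺, σ_1⁻), …, (σ_k⁺, σ_k⁻) for f such that for every choice of signs ε ∈ {+,−}^k the intersection σ_1^{ε_1} ∩ ⋯ ∩ σ_k^{ε_k}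 contains no set from F. -/
/-!
Since `n ≥ d + c + 2`, the affine dependences of the points `f(e₁), …, f(eₙ)` form a space of
dimension at least `c + 1`. Choosing `c + 1` independent ones gives a lift
`p : [n] → ℝ^{c+1}` such that for every `a ≠ 0` the numbers `⟪a, pᵢ⟫` form a nontrivial affine
dependence, whose positive and negative supports are a Radon pair for `f`. Disjoint hulls
`conv p(A)`, `conv p(B)` force `A ∩ B = ∅`, so the colouring of `F` transfers to the polytopes
`conv p(A)`, and the hypothesis yields `a₁, …, a_k`; shrink the Radon pair of each `aⱼ` to a
minimal one. If a sign-intersection contained `A ∈ F`, then for every `j` all `⟪aⱼ, pᵢ⟫`,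
`i ∈ A`, would have one strict sign, so `conv p(A)` would miss every hyperplane `aⱼ^⊥`.
-/

open Finset
open scoped RealInnerProductSpace

section Radon

variable {n d : ℕ}

lemma IsRadonPair.exists_minimal {f : (Fin n → ℝ) → EuclideanSpace ℝ (Fin d)}
    {σp σm : Finset (Fin n)} (h : IsRadonPair f σp σm) :
    ∃ τp ⊆ σp, ∃ τm ⊆ σm, IsMinimalRadonPair f τp τm := by
  classical
  obtain ⟨⟨τp, τm⟩, hmem, hmin⟩ :=
    ((σp.powerset ×ˢ σm.powerset).filter fun q => IsRadonPair f q.1 q.2).exists_min_image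
      (fun q => #q.1 + #q.2) ⟨(σp, σm), by simp [h]⟩
  simp only [mem_filter, mem_product, mem_powerset] at hmem hmin
  obtain ⟨⟨hτp, hτm⟩, hτ⟩ := hmem
  refine ⟨τp, hτp, τm, hτm, hτ, fun τ hτ' => ?_, fun τ hτ' => ?_⟩
  · by_contra hne
    have : #τp + #τm ≤ #τp + #τ := hmin (τp, τ) ⟨⟨hτp, hτ'.subset.trans hτm⟩,
      hτ.1.mono_right hτ'.subset, Set.nonempty_iff_ne_empty.2 hne⟩
    have := card_lt_card hτ'
    omega
  · by_contra hne
    have : #τp + #τm ≤ #τ + #τm := hmin (τ, τm) ⟨⟨hτ'.subset.trans hτp, hτm⟩,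
      hτ.1.mono_left hτ'.subset, Set.nonempty_iff_ne_empty.2 hne⟩
    have := card_lt_card hτ'
    omega

lemma smul_mem_simplexFace {y : Fin n → ℝ} {σ : Finset (Fin n)} (hy : 0 ≤ y)
    (hσ : ∀ i ∉ σ, y i = 0) (hpos : 0 < ∑ i, y i) : (∑ i, y i)⁻¹ • y ∈ simplexFace σ := by
  refine ⟨⟨fun i => smul_nonneg (inv_nonneg.2 hpos.le) (hy i), ?_⟩, fun i hi => ?_⟩
  · simp [← Finset.mul_sum, hpos.ne']
  · simp [hσ i hi]

/-- A nontrivial affine dependence `∑ tᵢ f(eᵢ) = 0`, `∑ tᵢ = 0` of the images of the vertices. -/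
def IsAffineDependence {E : Type*} [AddCommGroup E] [Module ℝ E]
    (f : (Fin n → ℝ) →ᵃ[ℝ] E) (t : Fin n → ℝ) : Prop :=
  t ≠ 0 ∧ ∑ i, t i = 0 ∧ f.linear t = 0

lemma IsAffineDependence.isRadonPair {f : (Fin n → ℝ) →ᵃ[ℝ] EuclideanSpace ℝ (Fin d)}
    {t : Fin n → ℝ} (h : IsAffineDependence f t) :
    IsRadonPair f {i | 0 < t i} {i | t i < 0} := by
  obtain ⟨ht, hsum, hft⟩ := h
  have hparts : ∑ i, t⁻ i = ∑ i, t⁺ i := by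
    have h := congrArg (fun u : Fin n → ℝ => ∑ i, u i) (posPart_sub_negPart t)
    simp only [Pi.sub_apply, sum_sub_distrib, hsum] at h
    linarith
  have hpos : 0 < ∑ i, t⁺ i := by
    obtain ⟨i, hi⟩ := Function.ne_iff.1 ht
    rcases hi.lt_or_gt with hi | hi
    · rw [← hparts]
      exact sum_pos' (fun j _ => negPart_nonneg _) ⟨i, mem_univ i, by simpa using hi⟩
    · exact sum_pos' (fun j _ => posPart_nonneg _) ⟨i, mem_univ i, by simpa using hi⟩
  have hxp := smul_mem_simplexFace (σ := {i | 0 < t i}) (posPart_nonneg t)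
    (fun i hi => by simpa using hi) hpos
  have hxm := smul_mem_simplexFace (σ := {i | t i < 0}) (negPart_nonneg t)
    (fun i hi => by simpa using hi) (hparts ▸ hpos)
  rw [hparts] at hxm
  -- the two points differ by a multiple of `t`, which `f.linear` kills
  refine ⟨disjoint_filter.2 fun i _ hi => hi.not_gt, _, ⟨_, hxp, rfl⟩, _, hxm, ?_⟩
  rw [← vsub_eq_zero_iff_eq, ← AffineMap.linearMap_vsub, vsub_eq_sub, ← smul_sub, ← neg_sub,
    posPart_sub_negPart, smul_neg, map_neg, map_smul, hft, smul_zero, neg_zero]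

lemma exists_inner_isAffineDependence {D : ℕ} {E : Type*} [AddCommGroup E] [Module ℝ E]
    [FiniteDimensional ℝ E] (f : (Fin n → ℝ) →ᵃ[ℝ] E) (hn : Module.finrank ℝ E + 1 + D ≤ n) :
    ∃ p : Fin n → EuclideanSpace ℝ (Fin D),
      ∀ a ≠ 0, IsAffineDependence f fun i => ⟪a, p i⟫ := by
  set V : (Fin n → ℝ) →ₗ[ℝ] E × ℝ := f.linear.prod (∑ i, LinearMap.proj i)
  have hker : D ≤ Module.finrank ℝ (LinearMap.ker V) := by
    have h1 := LinearMap.finrank_range_add_finrank_ker V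
    have h2 := Submodule.finrank_le (LinearMap.range V)
    rw [Module.finrank_fin_fun] at h1
    rw [Module.finrank_prod, Module.finrank_self] at h2
    omega
  obtain ⟨w, hw⟩ := exists_linearIndependent_of_le_finrank hker
  refine ⟨fun i => WithLp.toLp 2 fun j => (w j : Fin n → ℝ) i, fun a ha => ?_⟩
  have hinner : (fun i => ⟪a, WithLp.toLp 2 fun j => (w j : Fin n → ℝ) i⟫) =
      ((∑ j, a j • w j : LinearMap.ker V) : Fin n → ℝ) := by
    ext i
    simp [PiLp.inner_apply, mul_comm]
  have hV := (∑ j, a j • w j : LinearMap.ker V).2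
  rw [LinearMap.mem_ker, LinearMap.prod_apply, Prod.mk_eq_zero] at hV
  rw [hinner]
  refine ⟨fun h => ha ?_, by simpa using hV.2, hV.1⟩
  ext j
  exact Fintype.linearIndependent_iff.1 hw _ (Submodule.coe_eq_zero.1 h) j

end Radon

section Kneser

variable {α β : Type*}

/-- `KneserChromaticLe` with disjointness replaced by an arbitrary relation `R`. -/
def IsKneserColorable (F : Finset α) (R : α → α → Prop) (r m : ℕ) : Prop :=
  ∃ c : α → Fin m, ∀ G ⊆ F, (∀ A ∈ G, ∀ B ∈ G, A ≠ B → R A B) →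
    (∀ A ∈ G, ∀ B ∈ G, c A = c B) → #G < r

lemma IsKneserColorable.image [Nonempty α] [DecidableEq β] {F : Finset α} {R : α → α → Prop}
    {S : β → β → Prop} {r m : ℕ} (g : α → β) (hF : IsKneserColorable F R r m)
    (hg : ∀ A ∈ F, ∀ B ∈ F, S (g A) (g B) → R A B) : IsKneserColorable (F.image g) S r m := by
  classical
  obtain ⟨col, hcol⟩ := hF
  set rep := Function.invFunOn g ↑F
  have hrep : ∀ P ∈ F.image g, rep P ∈ F ∧ g (rep P) = P := fun P hP =>
    Function.invFunOn_pos (mem_image.1 hP)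
  refine ⟨col ∘ rep, fun G hG hS hcolG => ?_⟩
  have hinj : Set.InjOn rep G := fun P hP Q hQ h => by
    rw [← (hrep P (hG hP)).2, ← (hrep Q (hG hQ)).2, h]
  rw [← card_image_of_injOn hinj]
  refine hcol _ (image_subset_iff.2 fun P hP => (hrep P (hG hP)).1) ?_ (by simpa using hcolG)
  simp only [forall_mem_image]
  intro P hP Q hQ hne
  refine hg _ (hrep P (hG hP)).1 _ (hrep Q (hG hQ)).1 ?_
  rw [(hrep P (hG hP)).2, (hrep Q (hG hQ)).2]
  exact hS P hP Q hQ fun h => hne (h ▸ rfl)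

end Kneser

section ConvexHull

variable {ι E : Type*} [DecidableEq E]

lemma disjoint_of_disjoint_convexHull_image [AddCommGroup E] [Module ℝ E] {p : ι → E}
    {A B : Finset ι}
    (h : Disjoint (convexHull ℝ (↑(A.image p) : Set E)) (convexHull ℝ ↑(B.image p))) :
    Disjoint A B :=
  Disjoint.of_image_finset <| Finset.disjoint_coe.1 <|
    h.mono (subset_convexHull ℝ _) (subset_convexHull ℝ _)

lemma inner_pos_of_mem_convexHull_image [NormedAddCommGroup E] [InnerProductSpace ℝ E]
    {p : ι → E} {A : Finset ι} {a x : E} (hA : ∀ i ∈ A, 0 < ⟪a, p i⟫)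
    (hx : x ∈ convexHull ℝ (↑(A.image p) : Set E)) : 0 < ⟪a, x⟫ := by
  refine convexHull_min ?_ (convex_halfSpace_gt (innerₛₗ ℝ a).isLinear 0) hx
  simpa [Set.subset_def] using hA

end ConvexHull

theorem linear_transversal_to_radon_pairs_general (c k m : ℕ)
    (hyp : ∀ G : Finset (Finset (EuclideanSpace ℝ (Fin (c + 1)))),
      (∀ P ∈ G, P.Nonempty) →
      (∃ cc : Finset (EuclideanSpace ℝ (Fin (c + 1))) → Fin m, ∀ G' ⊆ G,
        (∀ P ∈ G', ∀ Q ∈ G', P ≠ Q →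
          Disjoint (convexHull ℝ (P : Set (EuclideanSpace ℝ (Fin (c + 1)))))
            (convexHull ℝ (Q : Set (EuclideanSpace ℝ (Fin (c + 1)))))) →
        (∀ P ∈ G', ∀ Q ∈ G', cc P = cc Q) → G'.card < 2 ^ k) →
      ∃ a : Fin k → EuclideanSpace ℝ (Fin (c + 1)),
        (∀ j, a j ≠ 0) ∧
        ∀ P ∈ G, ∃ x ∈ convexHull ℝ (P : Set (EuclideanSpace ℝ (Fin (c + 1)))),
          ∃ j : Fin k, (inner ℝ (a j) x : ℝ) = 0)
    (d : ℕ) (n : ℕ) (hn : d + c + 2 ≤ n)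
    (f : (Fin n → ℝ) →ᵃ[ℝ] EuclideanSpace ℝ (Fin d))
    (F : Finset (Finset (Fin n))) (hne : ∀ A ∈ F, A.Nonempty)
    (hχ : KneserChromaticLe F (2 ^ k) m) :
    ∃ σp σm : Fin k → Finset (Fin n),
      (∀ j, IsMinimalRadonPair (⇑f) (σp j) (σm j)) ∧
      ∀ ε : Fin k → Bool, ∀ A ∈ F,
        ¬A ⊆ Finset.univ.inf (fun j => if ε j then σp j else σm j) := by
  classical
  obtain ⟨p, hp⟩ := exists_inner_isAffineDependence f (D := c + 1)
    (by rw [finrank_euclideanSpace_fin]; omega)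
  have hχ' : IsKneserColorable F Disjoint (2 ^ k) m := hχ
  obtain ⟨a, ha0, ha⟩ := hyp (F.image (·.image p)) (by simpa using fun A hA => (hne A hA).image p)
    (hχ'.image _ fun A _ B _ => disjoint_of_disjoint_convexHull_image)
  choose σp hσp σm hσm hmin using fun j => (hp (a j) (ha0 j)).isRadonPair.exists_minimal
  refine ⟨σp, σm, hmin, fun ε A hA hAε => ?_⟩
  obtain ⟨x, hx, j, hxj⟩ := ha _ (mem_image_of_mem _ hA)
  have hAj : A ⊆ if ε j then σp j else σm j := hAε.trans (inf_le (mem_univ j))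
  split_ifs at hAj
  · exact (inner_pos_of_mem_convexHull_image (fun i hi => by simpa using hσp j (hAj hi)) hx).ne'
      hxj
  · refine (inner_pos_of_mem_convexHull_image (a := -a j) (fun i hi => ?_) hx).ne' ?_
    · simpa [inner_neg_left] using hσm j (hAj hi)
    · rw [inner_neg_left, hxj, neg_zero]

/-- **Linear hyperplane transversals imply Radon pairs.** Suppose every finite family of
polytopes in `ℝ^{c+1}` with `χ(KG^(2^k)) ≤ m` is pierced by `k` linear hyperplanes. Then for
all `d ≥ 1`, `n ≥ d + c + 2`, every linear (affine) map `f : Δ_{n-1} → ℝ^d` and every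
family `F` of nonempty subsets of `[n]` with `χ(KG^(2^k)(F)) ≤ m` admit `k` minimal Radon
pairs none of whose sign-intersections contains a member of `F`. -/
theorem linear_transversal_to_radon_pairs (c k m : ℕ) (hc : 1 ≤ c) (hk : 1 ≤ k)
    (hm : 1 ≤ m)
    (hyp : ∀ G : Finset (Finset (EuclideanSpace ℝ (Fin (c + 1)))),
      (∀ P ∈ G, P.Nonempty) →
      (∃ cc : Finset (EuclideanSpace ℝ (Fin (c + 1))) → Fin m, ∀ G' ⊆ G,
        (∀ P ∈ G', ∀ Q ∈ G', P ≠ Q →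
          Disjoint (convexHull ℝ (P : Set (EuclideanSpace ℝ (Fin (c + 1)))))
            (convexHull ℝ (Q : Set (EuclideanSpace ℝ (Fin (c + 1)))))) →
        (∀ P ∈ G', ∀ Q ∈ G', cc P = cc Q) → G'.card < 2 ^ k) →
      ∃ a : Fin k → EuclideanSpace ℝ (Fin (c + 1)),
        (∀ j, a j ≠ 0) ∧
        ∀ P ∈ G, ∃ x ∈ convexHull ℝ (P : Set (EuclideanSpace ℝ (Fin (c + 1)))),
          ∃ j : Fin k, (inner ℝ (a j) x : ℝ) = 0)
    (d : ℕ) (hd : 1 ≤ d) (n : ℕ) (hn : d + c + 2 ≤ n)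
    (f : (Fin n → ℝ) →ᵃ[ℝ] EuclideanSpace ℝ (Fin d))
    (F : Finset (Finset (Fin n))) (hne : ∀ A ∈ F, A.Nonempty)
    (hχ : KneserChromaticLe F (2 ^ k) m) :
    ∃ σp σm : Fin k → Finset (Fin n),
      (∀ j, IsMinimalRadonPair (⇑f) (σp j) (σm j)) ∧
      ∀ ε : Fin k → Bool, ∀ A ∈ F,
        ¬A ⊆ Finset.univ.inf (fun j => if ε j then σp j else σm j) :=
  linear_transversal_to_radon_pairs_general c k m hyp d n hn f F hne hχ
end

section
/- Let c ≥ 1, k ≥ 1, and m ≥ 1 be integers. Suppose that for any finite family G of polytopes in ℝ^c with χ(KG^{2^k}(G)) ≤ m there exist k affine hyperplanes in ℝ^c which pierce G. Then for any finite point sets X_1, …, X_m ⊂ ℝ^c there exist k affine hyperplanes H_1, …, H_k in ℝ^c such that for every choice of signs ε ∈ {+,−}^k the open orthant H_1^{ε_1} ∩ ⋯ ∩ H_k^{ε_k} contains at most |X_i|/2^k points of each X_i. -/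
/-!
Colour every `(⌊|X i| / 2^k⌋ + 1)`-element subset of `X i` by `i`. A monochromatic class cannot
contain `2^k` pairwise disjoint sets, since they would use more than `|X i|` points, so the
hypothesis gives `k` hyperplanes piercing the convex hulls of all these subsets. An open orthant
is convex and misses every hyperplane, so it cannot contain any of the subsets, i.e. it holds at
most `⌊|X i| / 2^k⌋` points of `X i`.
-/

open Finset

section Orthant

variable {E ι : Type*} [NormedAddCommGroup E] [InnerProductSpace ℝ E]

def openOrthant (a : ι → E) (b : ι → ℝ) (ε : ι → Bool) : Set E :=
  {x | ∀ j, if ε j then (inner ℝ (a j) x : ℝ) > b j else (inner ℝ (a j) x : ℝ) < b j}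

theorem convex_openOrthant (a : ι → E) (b : ι → ℝ) (ε : ι → Bool) :
    Convex ℝ (openOrthant a b ε) := by
  simp only [openOrthant, Set.ofPred_forall]
  refine convex_iInter fun j => ?_
  have hlin : IsLinearMap ℝ (inner ℝ (a j)) := (innerSL ℝ (a j)).toLinearMap.isLinear
  cases ε j
  · exact convex_halfSpace_lt hlin (b j)
  · exact convex_halfSpace_gt hlin (b j)

theorem inner_ne_of_mem_openOrthant {a : ι → E} {b : ι → ℝ} {ε : ι → Bool} {x : E}
    (hx : x ∈ openOrthant a b ε) (j : ι) : inner ℝ (a j) x ≠ b j := by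
  have hxj := hx j
  split_ifs at hxj
  · exact hxj.ne'
  · exact hxj.ne

theorem Finset.disjoint_of_disjoint_convexHull {P Q : Finset E}
    (h : Disjoint (convexHull ℝ (P : Set E)) (convexHull ℝ (Q : Set E))) : Disjoint P Q :=
  Finset.disjoint_coe.mp (h.mono (subset_convexHull ℝ _) (subset_convexHull ℝ _))

end Orthant

section LargeSubsets

variable {α ι : Type*} [DecidableEq α]

theorem card_mul_le_of_pairwiseDisjoint {X : Finset α} {t : ℕ} {G : Finset (Finset α)}
    (hG : G ⊆ X.powersetCard t) (hdisj : (G : Set (Finset α)).PairwiseDisjoint id) :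
    G.card * t ≤ X.card :=
  calc G.card * t = ∑ P ∈ G, P.card := by
        rw [sum_congr rfl fun P hP => (mem_powersetCard.mp (hG hP)).2, sum_const, smul_eq_mul]
    _ = (G.biUnion id).card := (card_biUnion hdisj).symm
    _ ≤ X.card := card_le_card <| biUnion_subset.mpr fun P hP => (mem_powersetCard.mp (hG hP)).1

theorem card_lt_of_pairwiseDisjoint {X : Finset α} {N : ℕ} (hN : 0 < N) {G : Finset (Finset α)}
    (hG : G ⊆ X.powersetCard (X.card / N + 1))
    (hdisj : (G : Set (Finset α)).PairwiseDisjoint id) : G.card < N := by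
  by_contra! hNG
  have hle := card_mul_le_of_pairwiseDisjoint hG hdisj
  have hlt := Nat.lt_mul_div_succ X.card hN
  have := Nat.mul_le_mul_right (X.card / N + 1) hNG
  omega

variable [Fintype ι]

def largeSubsets (X : ι → Finset α) (N : ℕ) : Finset (Finset α) :=
  univ.biUnion fun i => (X i).powersetCard ((X i).card / N + 1)

theorem mem_largeSubsets {X : ι → Finset α} {N : ℕ} {P : Finset α} :
    P ∈ largeSubsets X N ↔ ∃ i, P ∈ (X i).powersetCard ((X i).card / N + 1) := by
  simp [largeSubsets]

theorem nonempty_of_mem_largeSubsets {X : ι → Finset α} {N : ℕ} {P : Finset α}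
    (hP : P ∈ largeSubsets X N) : P.Nonempty := by
  obtain ⟨i, hi⟩ := mem_largeSubsets.mp hP
  rw [← card_pos, (mem_powersetCard.mp hi).2]
  exact Nat.succ_pos _

theorem exists_coloring_largeSubsets [Nonempty ι] (X : ι → Finset α) {N : ℕ} (hN : 0 < N) :
    ∃ col : Finset α → ι, ∀ G ⊆ largeSubsets X N,
      (G : Set (Finset α)).PairwiseDisjoint id → (∀ P ∈ G, ∀ Q ∈ G, col P = col Q) →
        G.card < N := by
  have hcol (P : Finset α) :
      ∃ i, P ∈ largeSubsets X N → P ∈ (X i).powersetCard ((X i).card / N + 1) := by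
    by_cases hP : P ∈ largeSubsets X N
    · exact (mem_largeSubsets.mp hP).imp fun _ hi _ => hi
    · exact ⟨Classical.arbitrary ι, fun h => absurd h hP⟩
  choose col hcol using hcol
  refine ⟨col, fun G hG hdisj hmono => ?_⟩
  obtain rfl | ⟨P₀, hP₀⟩ := G.eq_empty_or_nonempty
  · exact hN
  refine card_lt_of_pairwiseDisjoint (X := X (col P₀)) hN (fun P hP => ?_) hdisj
  rw [← hmono P hP P₀ hP₀]
  exact hcol P (hG hP)

end LargeSubsets

theorem ncard_inter_openOrthant_le {E ι κ : Type*} [NormedAddCommGroup E]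
    [InnerProductSpace ℝ E] [DecidableEq E] [Fintype κ] {X : κ → Finset E} {N : ℕ}
    {a : ι → E} {b : ι → ℝ}
    (hpierce : ∀ P ∈ largeSubsets X N,
      ∃ x ∈ convexHull ℝ (P : Set E), ∃ j, (inner ℝ (a j) x : ℝ) = b j)
    (ε : ι → Bool) (i : κ) :
    N * ((X i : Set E) ∩ openOrthant a b ε).ncard ≤ (X i).card := by
  classical
  set F := (X i).filter (· ∈ openOrthant a b ε)
  have hF : F.card ≤ (X i).card / N := by
    by_contra! hbig
    obtain ⟨S, hSF, hS⟩ := exists_subset_card_eq hbig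
    have hSmem : S ∈ largeSubsets X N :=
      mem_largeSubsets.mpr ⟨i, mem_powersetCard.mpr ⟨hSF.trans (filter_subset _ _), hS⟩⟩
    obtain ⟨x, hx, j, hxj⟩ := hpierce S hSmem
    have hSorth : (S : Set E) ⊆ openOrthant a b ε := fun y hy => (mem_filter.mp (hSF hy)).2
    exact inner_ne_of_mem_openOrthant (convexHull_min hSorth (convex_openOrthant a b ε) hx) j hxj
  have hcoe : (X i : Set E) ∩ openOrthant a b ε = F := (coe_filter _ _).symm
  rw [hcoe, Set.ncard_coe_finset]
  exact (Nat.mul_le_mul_left N hF).trans (Nat.mul_div_le _ _)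

theorem transversal_to_equipartition_general (c k m : ℕ) (hm : 1 ≤ m)
    (hyp : ∀ G : Finset (Finset (EuclideanSpace ℝ (Fin c))),
      (∀ P ∈ G, P.Nonempty) →
      (∃ cc : Finset (EuclideanSpace ℝ (Fin c)) → Fin m, ∀ G' ⊆ G,
        (∀ P ∈ G', ∀ Q ∈ G', P ≠ Q →
          Disjoint (convexHull ℝ (P : Set (EuclideanSpace ℝ (Fin c))))
            (convexHull ℝ (Q : Set (EuclideanSpace ℝ (Fin c))))) →
        (∀ P ∈ G', ∀ Q ∈ G', cc P = cc Q) → G'.card < 2 ^ k) →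
      ∃ (a : Fin k → EuclideanSpace ℝ (Fin c)) (b : Fin k → ℝ),
        (∀ j, a j ≠ 0) ∧
        ∀ P ∈ G, ∃ x ∈ convexHull ℝ (P : Set (EuclideanSpace ℝ (Fin c))),
          ∃ j : Fin k, (inner ℝ (a j) x : ℝ) = b j)
    (X : Fin m → Finset (EuclideanSpace ℝ (Fin c))) :
    ∃ (a : Fin k → EuclideanSpace ℝ (Fin c)) (b : Fin k → ℝ),
      (∀ j, a j ≠ 0) ∧
      ∀ (ε : Fin k → Bool) (i : Fin m),
        2 ^ k * {x : EuclideanSpace ℝ (Fin c) | x ∈ X i ∧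
            ∀ j : Fin k, if ε j then (inner ℝ (a j) x : ℝ) > b j
              else (inner ℝ (a j) x : ℝ) < b j}.ncard ≤ (X i).card := by
  classical
  have : Nonempty (Fin m) := ⟨⟨0, hm⟩⟩
  obtain ⟨col, hcol⟩ := exists_coloring_largeSubsets X (Nat.two_pow_pos k)
  obtain ⟨a, b, ha, hpierce⟩ := hyp (largeSubsets X (2 ^ k))
    (fun _ => nonempty_of_mem_largeSubsets)
    ⟨col, fun G hG hdisj => hcol G hG fun P hP Q hQ hPQ =>
      Finset.disjoint_of_disjoint_convexHull (hdisj P hP Q hQ hPQ)⟩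
  exact ⟨a, b, ha, ncard_inter_openOrthant_le hpierce⟩

/-- **Affine hyperplane transversals imply equipartitions.** Suppose every finite family of
polytopes in `ℝ^c` with `χ(KG^(2^k)) ≤ m` is pierced by `k` affine hyperplanes. Then any
`m` finite point sets in `ℝ^c` admit an equipartition by `k` affine hyperplanes: every open
orthant contains at most `|X i| / 2^k` points of each `X i`. -/
theorem transversal_to_equipartition (c k m : ℕ) (hc : 1 ≤ c) (hk : 1 ≤ k) (hm : 1 ≤ m)
    (hyp : ∀ G : Finset (Finset (EuclideanSpace ℝ (Fin c))),
      (∀ P ∈ G, P.Nonempty) →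
      (∃ cc : Finset (EuclideanSpace ℝ (Fin c)) → Fin m, ∀ G' ⊆ G,
        (∀ P ∈ G', ∀ Q ∈ G', P ≠ Q →
          Disjoint (convexHull ℝ (P : Set (EuclideanSpace ℝ (Fin c))))
            (convexHull ℝ (Q : Set (EuclideanSpace ℝ (Fin c))))) →
        (∀ P ∈ G', ∀ Q ∈ G', cc P = cc Q) → G'.card < 2 ^ k) →
      ∃ (a : Fin k → EuclideanSpace ℝ (Fin c)) (b : Fin k → ℝ),
        (∀ j, a j ≠ 0) ∧
        ∀ P ∈ G, ∃ x ∈ convexHull ℝ (P : Set (EuclideanSpace ℝ (Fin c))),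
          ∃ j : Fin k, (inner ℝ (a j) x : ℝ) = b j)
    (X : Fin m → Finset (EuclideanSpace ℝ (Fin c))) :
    ∃ (a : Fin k → EuclideanSpace ℝ (Fin c)) (b : Fin k → ℝ),
      (∀ j, a j ≠ 0) ∧
      ∀ (ε : Fin k → Bool) (i : Fin m),
        2 ^ k * {x : EuclideanSpace ℝ (Fin c) | x ∈ X i ∧
            ∀ j : Fin k, if ε j then (inner ℝ (a j) x : ℝ) > b j
              else (inner ℝ (a j) x : ℝ) < b j}.ncard ≤ (X i).card :=
  transversal_to_equipartition_general c k m hm hyp X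
end
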